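/- Let δ > 1, ξ ∈ ℝ, and let Φ₂ : ℝ × ℝ → ℝ be a C¹ function, 2π-periodic in its first variable, with Φ₂(x,y) > 0 for all (x,y) ∈ ℝ × [0,1]. Then for every ρ ∈ (0,1) there exists λ* > 0 such that for all λ ∈ (0, λ*) and all (x, ȳ) ∈ ℝ × [0,1], the rescaled second component of the return map, ȳ ↦ λ^{δ−1}·(ȳ + Φ₂(x, λȳ))^δ, is differentiable in ȳ with |∂/∂ȳ [ λ^{δ−1}·(ȳ + Φ₂(x, λȳ))^δ ]| = λ^{δ−1}·δ·(ȳ + Φ₂(x,λȳ))^{δ−1}·|1 + λ·∂Φ₂/∂y(x,λȳ)| ≤ ρ. -/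

import Mathlib

/-!
Differentiating `ȳ ↦ λ^{δ-1} (ȳ + Φ₂(x, λȳ))^δ` by the chain rule gives
`λ^{δ-1} δ u^{δ-1} (1 + λ ∂_yΦ₂)` with `u = ȳ + Φ₂(x, λȳ) > 0`. By periodicity in `x`, `Φ₂` and its
derivative only need to be bounded on the compact set `[0, 2π] × [0, 1]`, so for `λ ≤ 1` everything
except the factor `λ^{δ-1}` is bounded uniformly in `(x, ȳ)`; since `δ > 1`, that factor tends to `0`.
-/

open Real Filter Topology Set

theorem exists_norm_le_of_periodic_fst {Y E : Type*} [TopologicalSpace Y]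
    [SeminormedAddCommGroup E] {f : ℝ × Y → E} {c : ℝ} (hf : Continuous f) (hc : 0 < c)
    (hper : ∀ x y, f (x + c, y) = f (x, y)) {K : Set Y} (hK : IsCompact K) :
    ∃ M, ∀ x, ∀ y ∈ K, ‖f (x, y)‖ ≤ M := by
  obtain ⟨M, hM⟩ := (isCompact_Icc.prod hK).exists_bound_of_continuousOn
    (s := Icc 0 c ×ˢ K) hf.continuousOn
  refine ⟨M, fun x y hy => ?_⟩
  have hperiodic : Function.Periodic (fun t => f (t, y)) c := fun t => hper t y
  obtain ⟨x', hx', hxx'⟩ := hperiodic.exists_mem_Ico₀ hc x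
  simpa only [hxx'] using hM (x', y) ⟨Ico_subset_Icc_self hx', hy⟩

theorem fderiv_periodic_fst {𝕜 F E : Type*} [NontriviallyNormedField 𝕜]
    [NormedAddCommGroup F] [NormedSpace 𝕜 F] [NormedAddCommGroup E] [NormedSpace 𝕜 E]
    {f : 𝕜 × F → E} {c : 𝕜} (hper : ∀ x y, f (x + c, y) = f (x, y)) (x : 𝕜) (y : F) :
    fderiv 𝕜 f (x + c, y) = fderiv 𝕜 f (x, y) := by
  have hshift : (fun p : 𝕜 × F => f (p + (c, 0))) = f :=
    funext fun p => by rw [← hper p.1 p.2]; congr 1; ext <;> simp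
  simpa [hshift] using (fderiv_comp_add_right (f := f) (x := (x, y)) (c, (0 : F))).symm

theorem hasDerivAt_rescaled_rpow {f : ℝ × ℝ → ℝ} {x lam δ t : ℝ}
    (hf : DifferentiableAt ℝ f (x, lam * t)) (hu : t + f (x, lam * t) ≠ 0 ∨ 1 ≤ δ) :
    HasDerivAt (fun s : ℝ => lam ^ (δ - 1) * (s + f (x, lam * s)) ^ δ)
      (lam ^ (δ - 1) * δ * (t + f (x, lam * t)) ^ (δ - 1)
        * (1 + lam * fderiv ℝ f (x, lam * t) (0, 1))) t := by
  have hpath : HasDerivAt (fun s : ℝ => (x, lam * s)) (0, lam) t := by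
    simpa using (hasDerivAt_const t x).prodMk ((hasDerivAt_id t).const_mul lam)
  have hinner : HasDerivAt (fun s => f (x, lam * s)) (lam * fderiv ℝ f (x, lam * t) (0, 1)) t := by
    have h := hf.hasFDerivAt.comp_hasDerivAt t hpath
    rwa [show ((0 : ℝ), lam) = lam • ((0 : ℝ), (1 : ℝ)) by simp, map_smul, smul_eq_mul] at h
  have hbase : HasDerivAt (fun s => s + f (x, lam * s))
      (1 + lam * fderiv ℝ f (x, lam * t) (0, 1)) t :=
    (hasDerivAt_id' t).add hinner
  exact ((hbase.rpow_const hu).const_mul (lam ^ (δ - 1))).congr_deriv (by ring)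

theorem rescaled_deriv_le {lam δ u A D B : ℝ} (hlam : 0 ≤ lam) (hlam1 : lam ≤ 1) (hδ : 1 ≤ δ)
    (hu : 0 ≤ u) (huA : u ≤ A) (hDB : |D| ≤ B) :
    lam ^ (δ - 1) * δ * u ^ (δ - 1) * |1 + lam * D| ≤
      lam ^ (δ - 1) * (δ * A ^ (δ - 1) * (1 + B)) := by
  have hfactor : |1 + lam * D| ≤ 1 + B :=
    calc |1 + lam * D| ≤ 1 + lam * |D| := by
          simpa [abs_mul, abs_of_nonneg hlam] using abs_add_le 1 (lam * D)
      _ ≤ 1 + B := by nlinarith [abs_nonneg D]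
  have hpow : u ^ (δ - 1) ≤ A ^ (δ - 1) := rpow_le_rpow hu huA (by linarith)
  have hcoeff : 0 ≤ lam ^ (δ - 1) * δ * A ^ (δ - 1) :=
    mul_nonneg (mul_nonneg (rpow_nonneg hlam _) (by linarith)) (rpow_nonneg (hu.trans huA) _)
  calc lam ^ (δ - 1) * δ * u ^ (δ - 1) * |1 + lam * D|
      ≤ lam ^ (δ - 1) * δ * A ^ (δ - 1) * (1 + B) := by gcongr
    _ = lam ^ (δ - 1) * (δ * A ^ (δ - 1) * (1 + B)) := by ring

theorem eventually_rpow_mul_lt {e C ρ : ℝ} (he : 0 < e) (hρ : 0 < ρ) :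
    ∀ᶠ lam in 𝓝[>] (0 : ℝ), lam ^ e * C < ρ := by
  have h : Tendsto (fun lam : ℝ => lam ^ e * C) (𝓝 0) (𝓝 0) := by
    simpa [zero_rpow he.ne'] using
      (continuousAt_rpow_const 0 e (Or.inr he.le)).tendsto.mul_const C
  exact nhdsWithin_le_nhds (h.eventually (gt_mem_nhds hρ))

theorem stmt_13_general (δ : ℝ) (hδ : 1 < δ) (Φ₂ : ℝ × ℝ → ℝ)
    (hΦ₂ : ContDiff ℝ 1 Φ₂)
    (hper : ∀ x y : ℝ, Φ₂ (x + 2 * π, y) = Φ₂ (x, y))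
    (hpos : ∀ x : ℝ, ∀ y ∈ Set.Icc (0:ℝ) 1, 0 < Φ₂ (x, y)) :
    ∀ ρ : ℝ, 0 < ρ → ρ < 1 →
      ∃ lamStar : ℝ, 0 < lamStar ∧
        ∀ lam : ℝ, 0 < lam → lam < lamStar →
          ∀ x : ℝ, ∀ ybar ∈ Set.Icc (0:ℝ) 1,
            HasDerivAt (fun t : ℝ => lam ^ (δ - 1) * (t + Φ₂ (x, lam * t)) ^ δ)
              (lam ^ (δ - 1) * δ * (ybar + Φ₂ (x, lam * ybar)) ^ (δ - 1)
                * (1 + lam * fderiv ℝ Φ₂ (x, lam * ybar) (0, 1))) ybar ∧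
            |lam ^ (δ - 1) * δ * (ybar + Φ₂ (x, lam * ybar)) ^ (δ - 1)
                * (1 + lam * fderiv ℝ Φ₂ (x, lam * ybar) (0, 1))| =
              lam ^ (δ - 1) * δ * (ybar + Φ₂ (x, lam * ybar)) ^ (δ - 1)
                * |1 + lam * fderiv ℝ Φ₂ (x, lam * ybar) (0, 1)| ∧
            |lam ^ (δ - 1) * δ * (ybar + Φ₂ (x, lam * ybar)) ^ (δ - 1)
                * (1 + lam * fderiv ℝ Φ₂ (x, lam * ybar) (0, 1))| ≤ ρ := by
  intro ρ hρ _
  obtain ⟨M₁, hM₁⟩ := exists_norm_le_of_periodic_fst hΦ₂.continuous two_pi_pos hper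
    (isCompact_Icc (a := (0 : ℝ)) (b := 1))
  obtain ⟨M₂, hM₂⟩ := exists_norm_le_of_periodic_fst (hΦ₂.continuous_fderiv one_ne_zero)
    two_pi_pos (fderiv_periodic_fst hper) (isCompact_Icc (a := (0 : ℝ)) (b := 1))
  have hsmall : ∀ᶠ lam in 𝓝[>] (0 : ℝ),
      lam < 1 ∧ lam ^ (δ - 1) * (δ * (1 + M₁) ^ (δ - 1) * (1 + M₂)) < ρ :=
    ((eventually_lt_nhds one_pos).filter_mono nhdsWithin_le_nhds).and
      (eventually_rpow_mul_lt (by linarith) hρ)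
  obtain ⟨lamStar, hlamStar, hIoo⟩ := mem_nhdsGT_iff_exists_Ioo_subset.1 hsmall
  refine ⟨lamStar, hlamStar, fun lam hlam hlamStar x ybar hybar => ?_⟩
  obtain ⟨hlam1, hlamρ⟩ := hIoo ⟨hlam, hlamStar⟩
  have hy : lam * ybar ∈ Icc (0 : ℝ) 1 :=
    ⟨mul_nonneg hlam.le hybar.1, by nlinarith [hybar.1, hybar.2]⟩
  have hu : 0 < ybar + Φ₂ (x, lam * ybar) := by linarith [hybar.1, hpos x _ hy]
  have habs : |lam ^ (δ - 1) * δ * (ybar + Φ₂ (x, lam * ybar)) ^ (δ - 1)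
      * (1 + lam * fderiv ℝ Φ₂ (x, lam * ybar) (0, 1))| =
      lam ^ (δ - 1) * δ * (ybar + Φ₂ (x, lam * ybar)) ^ (δ - 1)
        * |1 + lam * fderiv ℝ Φ₂ (x, lam * ybar) (0, 1)| := by
    rw [abs_mul, abs_of_nonneg (by positivity)]
  refine ⟨hasDerivAt_rescaled_rpow (hΦ₂.differentiable one_ne_zero _) (Or.inr hδ.le), habs, ?_⟩
  rw [habs]
  refine (rescaled_deriv_le hlam.le hlam1.le hδ.le hu.le ?_ ?_).trans hlamρ.le
  · linarith [hybar.2, (le_abs_self _).trans (hM₁ x _ hy)]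
  · simpa using (fderiv ℝ Φ₂ (x, lam * ybar)).le_of_opNorm_le (hM₂ x _ hy) ((0 : ℝ), (1 : ℝ))

theorem stmt_13 (δ ξ : ℝ) (hδ : 1 < δ) (Φ₂ : ℝ × ℝ → ℝ)
    (hΦ₂ : ContDiff ℝ 1 Φ₂)
    (hper : ∀ x y : ℝ, Φ₂ (x + 2 * π, y) = Φ₂ (x, y))
    (hpos : ∀ x : ℝ, ∀ y ∈ Set.Icc (0:ℝ) 1, 0 < Φ₂ (x, y)) :
    ∀ ρ : ℝ, 0 < ρ → ρ < 1 →
      ∃ lamStar : ℝ, 0 < lamStar ∧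
        ∀ lam : ℝ, 0 < lam → lam < lamStar →
          ∀ x : ℝ, ∀ ybar ∈ Set.Icc (0:ℝ) 1,
            HasDerivAt (fun t : ℝ => lam ^ (δ - 1) * (t + Φ₂ (x, lam * t)) ^ δ)
              (lam ^ (δ - 1) * δ * (ybar + Φ₂ (x, lam * ybar)) ^ (δ - 1)
                * (1 + lam * fderiv ℝ Φ₂ (x, lam * ybar) (0, 1))) ybar ∧
            |lam ^ (δ - 1) * δ * (ybar + Φ₂ (x, lam * ybar)) ^ (δ - 1)
                * (1 + lam * fderiv ℝ Φ₂ (x, lam * ybar) (0, 1))| =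
              lam ^ (δ - 1) * δ * (ybar + Φ₂ (x, lam * ybar)) ^ (δ - 1)
                * |1 + lam * fderiv ℝ Φ₂ (x, lam * ybar) (0, 1)| ∧
            |lam ^ (δ - 1) * δ * (ybar + Φ₂ (x, lam * ybar)) ^ (δ - 1)
                * (1 + lam * fderiv ℝ Φ₂ (x, lam * ybar) (0, 1))| ≤ ρ :=
  stmt_13_general δ hδ Φ₂ hΦ₂ hper hpos
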